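/- Let 0 < β < 2 and let v : ℝ → ℝ be a 2π-periodic C² function, and set u(x) = v(x) + Λ^β v(x). If u(x) ≥ 0 for all x, then |Λ^β v(x)| ≤ 4 · sup_y u(y) for every x ∈ ℝ, i.e. ‖Λ^β v‖_{L^∞} ≤ 4 ‖u‖_{L^∞}. -/

import Mathlib

/-!
Maximum principle: at a maximum point `x₀` of `v` every second difference `2v(x₀) − v(x₀+η) − v(x₀−η)`
is nonnegative, so `Λ^β v(x₀) ≥ 0` and `v ≤ v(x₀) ≤ u(x₀) ≤ sup u`; symmetrically, at a minimum point
`x₁` we get `Λ^β v(x₁) ≤ 0`, so `v ≥ v(x₁) ≥ u(x₁) ≥ 0`. Hence `Λ^β v = u − v` takes values in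
`[−sup u, sup u]`. The only analytic input is that `sup u` is finite (otherwise `⨆` is junk): the second
differences of `v` are `O(η²)` and `K_β(η) = O(|η|^{−1−β})` on `[−π, π]`, so `Λ^β v` is bounded.
-/

open MeasureTheory Real

/-- The constant `c_σ = Γ(1+σ) cos((1−σ)π/2) / π`. -/
noncomputable def cFrac (σ : ℝ) : ℝ :=
  Real.Gamma (1 + σ) * Real.cos ((1 - σ) * Real.pi / 2) / Real.pi

/-- The periodized kernel `K_σ(η) = ∑_{k∈ℤ} |η + 2kπ|^{-(1+σ)}`. -/
noncomputable def Kper (σ η : ℝ) : ℝ :=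
  ∑' k : ℤ, |η + 2 * (k : ℝ) * Real.pi| ^ (-(1 + σ))

/-- The fractional Laplacian `Λ^σ f` of a `2π`-periodic function, defined by
`Λ^σ f(x) = (c_σ/2) ∫_{-π}^{π} (2f(x) − f(x+η) − f(x−η)) K_σ(η) dη`. -/
noncomputable def fracLap (σ : ℝ) (f : ℝ → ℝ) (x : ℝ) : ℝ :=
  (cFrac σ / 2) *
    ∫ η in (-Real.pi)..Real.pi, (2 * f x - f (x + η) - f (x - η)) * Kper σ η

open Set

lemma cFrac_pos {σ : ℝ} (hσ0 : 0 < σ) (hσ2 : σ < 2) : 0 < cFrac σ := by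
  have hΓ : 0 < Gamma (1 + σ) := Gamma_pos_of_pos (by linarith)
  have hcos : 0 < cos ((1 - σ) * π / 2) :=
    cos_pos_of_mem_Ioo ⟨by nlinarith [pi_pos], by nlinarith [pi_pos]⟩
  exact div_pos (mul_pos hΓ hcos) pi_pos

lemma Kper_nonneg (σ η : ℝ) : 0 ≤ Kper σ η :=
  tsum_nonneg fun _ => rpow_nonneg (abs_nonneg _) _

lemma pi_mul_abs_intCast_le_abs_add {η : ℝ} (hη : |η| ≤ π) {k : ℤ} (hk : k ≠ 0) :
    π * |(k : ℝ)| ≤ |η + 2 * k * π| := by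
  have hk1 : (1 : ℝ) ≤ |(k : ℝ)| := by exact_mod_cast Int.one_le_abs hk
  have htri : |2 * (k : ℝ) * π| ≤ |η + 2 * k * π| + |η| := by
    simpa using abs_add_le (η + 2 * k * π) (-η)
  rw [abs_mul, abs_mul, abs_two, abs_of_pos pi_pos] at htri
  nlinarith [pi_pos]

lemma Kper_le {σ η : ℝ} (hσ : 0 < σ) (hη : |η| ≤ π) :
    Kper σ η ≤ |η| ^ (-(1 + σ)) + π ^ (-(1 + σ)) * ∑' k : ℤ, |(k : ℝ)| ^ (-(1 + σ)) := by
  have hs : Summable fun k : ℤ => |(k : ℝ)| ^ (-(1 + σ)) := summable_abs_int_rpow (by linarith)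
  set g : ℤ → ℝ := fun k =>
    (if k = 0 then |η| ^ (-(1 + σ)) else 0) + π ^ (-(1 + σ)) * |(k : ℝ)| ^ (-(1 + σ))
  have hδ : Summable fun k : ℤ => if k = 0 then |η| ^ (-(1 + σ)) else 0 :=
    summable_of_ne_finset_zero (s := {0}) fun k hk => if_neg (by simpa using hk)
  have hg : Summable g := hδ.add (hs.mul_left _)
  have hle : ∀ k : ℤ, |η + 2 * (k : ℝ) * π| ^ (-(1 + σ)) ≤ g k := by
    intro k
    rcases eq_or_ne k 0 with rfl | hk
    · simp only [g, Int.cast_zero, mul_zero, zero_mul, add_zero, if_pos, le_add_iff_nonneg_right]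
      positivity
    · simp only [g, if_neg hk, zero_add, ← mul_rpow pi_pos.le (abs_nonneg _)]
      exact rpow_le_rpow_of_nonpos (by positivity) (pi_mul_abs_intCast_le_abs_add hη hk)
        (by linarith)
  calc Kper σ η ≤ ∑' k, g k :=
        (hg.of_nonneg_of_le (fun _ => rpow_nonneg (abs_nonneg _) _) hle).tsum_le_tsum hle hg
    _ = _ := by rw [hδ.tsum_add (hs.mul_left _), tsum_ite_eq, tsum_mul_left]

lemma intervalIntegrable_abs_rpow {r : ℝ} (hr : -1 < r) (a b : ℝ) :
    IntervalIntegrable (fun x : ℝ => |x| ^ r) volume a b := by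
  have hloc : LocallyIntegrable (fun x : ℝ => |x| ^ r) volume :=
    locallyIntegrable_of_norm_le_rpow (by simp) (C := 1) (α := -r) (by simp; linarith)
      (ae_of_all _ fun x => by simp [abs_of_nonneg (rpow_nonneg (abs_nonneg x) r)])
      (measurable_id.abs.pow_const r).aestronglyMeasurable
  exact (hloc.integrableOn_isCompact isCompact_uIcc).intervalIntegrable

lemma abs_two_mul_sub_sub_le {f : ℝ → ℝ} {M : ℝ} (hf : ContDiff ℝ 2 f)
    (hM : ∀ y, |deriv (deriv f) y| ≤ M) (x η : ℝ) :
    |2 * f x - f (x + η) - f (x - η)| ≤ 2 * M * η ^ 2 := by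
  obtain ⟨hfd, -, hf'⟩ := (contDiff_succ_iff_deriv (n := 1)).mp hf
  have hf'd : Differentiable ℝ (deriv f) := hf'.differentiable one_ne_zero
  have hf'lip : ∀ y z, |deriv f y - deriv f z| ≤ M * |y - z| := fun y z =>
    Convex.norm_image_sub_le_of_norm_deriv_le (fun t _ => hf'd t) (fun t _ => hM t)
      convex_univ (mem_univ z) (mem_univ y)
  set g : ℝ → ℝ := fun t => 2 * f x - f (x + t) - f (x - t)
  have hg : ∀ t, HasDerivAt g (deriv f (x - t) - deriv f (x + t)) t := by
    intro t
    have hadd := (hfd (x + t)).hasDerivAt.comp_const_add x t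
    have hsub := (hfd (x - t)).hasDerivAt.comp_const_sub x t
    exact (((hasDerivAt_const t (2 * f x)).sub hadd).sub hsub).congr_deriv (by ring)
  have hg' : ∀ t ∈ Metric.closedBall (0 : ℝ) |η|, ‖deriv g t‖ ≤ 2 * M * |η| := by
    intro t ht
    rw [(hg t).deriv, norm_eq_abs]
    have ht' : |t| ≤ |η| := by simpa using ht
    calc |deriv f (x - t) - deriv f (x + t)| ≤ M * |(x - t) - (x + t)| := hf'lip _ _
      _ = 2 * M * |t| := by
        rw [show (x - t) - (x + t) = -(2 * t) by ring, abs_neg, abs_mul, abs_two]; ring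
      _ ≤ 2 * M * |η| := by
        have hM0 : 0 ≤ M := (abs_nonneg _).trans (hM 0)
        gcongr
  have := Convex.norm_image_sub_le_of_norm_deriv_le (fun t _ => (hg t).differentiableAt) hg'
    (convex_closedBall 0 |η|) (Metric.mem_closedBall_self (abs_nonneg η))
    (by simp : η ∈ Metric.closedBall (0 : ℝ) |η|)
  have hg0 : g 0 = 0 := by simp only [g, add_zero, sub_zero]; ring
  simpa [hg0, sq_abs, pow_two, mul_assoc] using this

lemma Function.Periodic.deriv {f : ℝ → ℝ} {c : ℝ} (hf : Function.Periodic f c) :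
    Function.Periodic (deriv f) c := fun x => by
  rw [← deriv_comp_add_const, show (fun y => f (y + c)) = f from funext hf]

lemma Function.Periodic.exists_forall_ge_of_continuous {f : ℝ → ℝ} {c : ℝ}
    (hp : Function.Periodic f c) (hc : c ≠ 0) (hf : Continuous f) : ∃ x₀, ∀ y, f y ≤ f x₀ := by
  obtain ⟨_, ⟨x₀, rfl⟩, h⟩ := (hp.compact_of_continuous hc hf).exists_isGreatest (range_nonempty f)
  exact ⟨x₀, fun y => h ⟨y, rfl⟩⟩

lemma Function.Periodic.exists_forall_le_of_continuous {f : ℝ → ℝ} {c : ℝ}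
    (hp : Function.Periodic f c) (hc : c ≠ 0) (hf : Continuous f) : ∃ x₀, ∀ y, f x₀ ≤ f y := by
  obtain ⟨_, ⟨x₀, rfl⟩, h⟩ := (hp.compact_of_continuous hc hf).exists_isLeast (range_nonempty f)
  exact ⟨x₀, fun y => h ⟨y, rfl⟩⟩

lemma sq_mul_abs_rpow_neg_le (σ η : ℝ) : η ^ 2 * |η| ^ (-(1 + σ)) ≤ |η| ^ (1 - σ) := by
  rcases eq_or_ne η 0 with rfl | hη
  · simpa using rpow_nonneg le_rfl (1 - σ)
  · rw [← sq_abs, ← rpow_natCast, ← rpow_add (abs_pos.mpr hη)]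
    exact le_of_eq (congrArg _ (by push_cast; ring))

lemma abs_fracLap_le_of_abs_two_mul_sub_sub_le {σ M : ℝ} (hσ0 : 0 < σ) (hσ2 : σ < 2)
    {f : ℝ → ℝ} (hf : ∀ x η, |2 * f x - f (x + η) - f (x - η)| ≤ M * η ^ 2) :
    ∃ C, ∀ x, |fracLap σ f x| ≤ C := by
  have hM : 0 ≤ M := by simpa using (abs_nonneg _).trans (hf 0 1)
  set T := π ^ (-(1 + σ)) * ∑' k : ℤ, |(k : ℝ)| ^ (-(1 + σ))
  set g : ℝ → ℝ := fun η => M * |η| ^ (1 - σ) + M * T * η ^ 2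
  have hg : IntervalIntegrable g volume (-π) π :=
    ((intervalIntegrable_abs_rpow (by linarith) _ _).const_mul M).add
      ((continuous_pow 2).intervalIntegrable _ _ |>.const_mul _)
  refine ⟨|cFrac σ / 2| * |∫ η in (-π)..π, g η|, fun x => ?_⟩
  rw [fracLap, abs_mul]
  refine mul_le_mul_of_nonneg_left ((norm_eq_abs _).symm.trans_le ?_) (abs_nonneg _)
  refine intervalIntegral.norm_integral_le_abs_of_norm_le
    (ae_restrict_of_forall_mem measurableSet_uIoc fun η hη => ?_) hg
  rw [uIoc_of_le (by linarith [pi_pos])] at hη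
  have hηπ : |η| ≤ π := abs_le.mpr ⟨hη.1.le, hη.2⟩
  rw [norm_eq_abs, abs_mul, abs_of_nonneg (Kper_nonneg σ η)]
  calc |2 * f x - f (x + η) - f (x - η)| * Kper σ η
      ≤ M * η ^ 2 * (|η| ^ (-(1 + σ)) + T) :=
        mul_le_mul (hf x η) (Kper_le hσ0 hηπ) (Kper_nonneg σ η) (mul_nonneg hM (sq_nonneg η))
    _ = M * (η ^ 2 * |η| ^ (-(1 + σ))) + M * T * η ^ 2 := by ring
    _ ≤ M * |η| ^ (1 - σ) + M * T * η ^ 2 := by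
        gcongr
        exact sq_mul_abs_rpow_neg_le σ η

lemma fracLap_nonneg_of_forall_le {σ : ℝ} (hσ0 : 0 < σ) (hσ2 : σ < 2) {f : ℝ → ℝ} {x₀ : ℝ}
    (hx₀ : ∀ y, f y ≤ f x₀) : 0 ≤ fracLap σ f x₀ := by
  refine mul_nonneg (by linarith [cFrac_pos hσ0 hσ2]) ?_
  refine intervalIntegral.integral_nonneg (by linarith [pi_pos]) fun η _ => ?_
  exact mul_nonneg (by linarith [hx₀ (x₀ + η), hx₀ (x₀ - η)]) (Kper_nonneg σ η)

lemma fracLap_neg (σ : ℝ) (f : ℝ → ℝ) (x : ℝ) : fracLap σ (fun y => -f y) x = -fracLap σ f x := by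
  simp only [fracLap, ← mul_neg, ← intervalIntegral.integral_neg]
  congr 2 with η
  ring

lemma fracLap_nonpos_of_forall_ge {σ : ℝ} (hσ0 : 0 < σ) (hσ2 : σ < 2) {f : ℝ → ℝ} {x₀ : ℝ}
    (hx₀ : ∀ y, f x₀ ≤ f y) : fracLap σ f x₀ ≤ 0 := by
  have := fracLap_nonneg_of_forall_le hσ0 hσ2 (f := fun y => -f y) fun y => neg_le_neg (hx₀ y)
  rw [fracLap_neg] at this
  linarith

lemma exists_abs_fracLap_le_of_periodic {σ c : ℝ} (hσ0 : 0 < σ) (hσ2 : σ < 2) {f : ℝ → ℝ}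
    (hf : ContDiff ℝ 2 f) (hp : Function.Periodic f c) (hc : c ≠ 0) :
    ∃ C, ∀ x, |fracLap σ f x| ≤ C := by
  have hf'' : Continuous (deriv (deriv f)) :=
    ((contDiff_succ_iff_deriv (n := 1)).mp hf).2.2.continuous_deriv le_rfl
  obtain ⟨M, hM⟩ :=
    isBounded_iff_forall_norm_le.mp (hp.deriv.deriv.isBounded_of_continuous hc hf'')
  exact abs_fracLap_le_of_abs_two_mul_sub_sub_le hσ0 hσ2
    (abs_two_mul_sub_sub_le hf fun y => hM _ ⟨y, rfl⟩)

theorem stmt2 (β : ℝ) (hβ0 : 0 < β) (hβ2 : β < 2)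
    (v : ℝ → ℝ) (hv : ContDiff ℝ 2 v) (hvper : Function.Periodic v (2 * Real.pi))
    (u : ℝ → ℝ) (hu : ∀ x, u x = v x + fracLap β v x)
    (hupos : ∀ x, 0 ≤ u x) :
    ∀ x, |fracLap β v x| ≤ 4 * ⨆ y, u y := by
  obtain ⟨C, hC⟩ := exists_abs_fracLap_le_of_periodic hβ0 hβ2 hv hvper two_pi_pos.ne'
  obtain ⟨x₀, hx₀⟩ := hvper.exists_forall_ge_of_continuous two_pi_pos.ne' hv.continuous
  obtain ⟨x₁, hx₁⟩ := hvper.exists_forall_le_of_continuous two_pi_pos.ne' hv.continuous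
  have hbdd : BddAbove (range u) := ⟨v x₀ + C, by
    rintro _ ⟨y, rfl⟩
    linarith [hu y, hx₀ y, (abs_le.mp (hC y)).2]⟩
  have hle_sup : ∀ y, u y ≤ ⨆ y, u y := le_ciSup hbdd
  have hv_le : ∀ y, v y ≤ ⨆ y, u y := fun y => by
    linarith [hx₀ y, hu x₀, hle_sup x₀, fracLap_nonneg_of_forall_le hβ0 hβ2 hx₀]
  have hv_nonneg : ∀ y, 0 ≤ v y := fun y => by
    linarith [hx₁ y, hu x₁, hupos x₁, fracLap_nonpos_of_forall_ge hβ0 hβ2 hx₁]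
  intro x
  have hsup_nonneg : 0 ≤ ⨆ y, u y := (hupos x).trans (hle_sup x)
  rw [abs_le]
  constructor <;> linarith [hu x, hupos x, hle_sup x, hv_le x, hv_nonneg x]
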